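/- arXiv:1907.08790 — 4 statements merged into one kernel-verified Lean document; each statement's English description precedes it below -/
import Mathlib

section
/- Let d ≥ 2, γ ∈ ℂ nonzero, g, h ∈ ℂ^{d-1}, and W = [[β*, h^H],[g, -γ I_{d-1}]] with β* γ = 1 - h^H g. Then det(W) = (-1)^{d-1} γ^{d-2}. -/
open Matrix

/-- det W = (-1)^(d-1) γ^(d-2) for the ICE de-mixing matrix
    W = [[β*, hᴴ],[g, -γ I]] with β* γ = 1 - hᴴ g. -/
theorem stmt1 (d : ℕ) (hd : 2 ≤ d) (γ β : ℂ) (hγ : γ ≠ 0)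
    (g h : Matrix (Fin (d - 1)) Unit ℂ)
    (hβγ : (starRingEnd ℂ) β * γ = 1 - (hᴴ * g) () ())
    (W : Matrix (Unit ⊕ Fin (d - 1)) (Unit ⊕ Fin (d - 1)) ℂ)
    (hW : W = fromBlocks (Matrix.of fun _ _ => (starRingEnd ℂ) β) hᴴ g (-(γ • 1))) :
    W.det = (-1) ^ (d - 1) * γ ^ (d - 2) := by
  subst hW
  have hD : -(γ • (1 : Matrix (Fin (d-1)) (Fin (d-1)) ℂ)) = (-γ) • 1 := by
    rw [neg_smul]
  rw [hD]
  have hγ' : (-γ) ≠ 0 := neg_ne_zero.mpr hγ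
  have hu : IsUnit ((-γ) • (1 : Matrix (Fin (d-1)) (Fin (d-1)) ℂ)).det := by
    rw [det_smul, det_one, mul_one]
    exact (pow_ne_zero _ hγ').isUnit
  have hk : Invertible (-γ) := (isUnit_iff_ne_zero.mpr hγ').invertible
  have h1 : IsUnit (1 : Matrix (Fin (d-1)) (Fin (d-1)) ℂ).det := by simp
  have hinv : ((-γ) • (1 : Matrix (Fin (d-1)) (Fin (d-1)) ℂ))⁻¹ = (-γ)⁻¹ • 1 := by
    refine inv_eq_left_inv ?_
    rw [smul_mul, Matrix.one_mul, smul_smul, inv_mul_cancel₀ hγ', one_smul]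
  have := Matrix.invertibleOfIsUnitDet _ hu
  rw [det_fromBlocks₂₂, invOf_eq_nonsing_inv, hinv]
  rw [det_smul, det_one, mul_one]
  have hdet1 : (Matrix.of (fun _ _ => (starRingEnd ℂ) β) - hᴴ * ((-γ)⁻¹ • (1 : Matrix (Fin (d-1)) (Fin (d-1)) ℂ)) * g).det
      = (starRingEnd ℂ) β - (-γ)⁻¹ * (hᴴ * g) () () := by
    rw [det_unique]
    simp [Matrix.mul_smul, Matrix.mul_one, Matrix.smul_mul, Matrix.smul_apply, smul_eq_mul]
  rw [hdet1]
  set s := (hᴴ * g) () () with hs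
  have hβ : (starRingEnd ℂ) β = (1 - s) / γ := by
    field_simp at hβγ ⊢
    linear_combination hβγ
  rw [hβ]
  have h2 : (1 - s) / γ - (-γ)⁻¹ * s = γ⁻¹ := by
    field_simp
    ring
  rw [h2]
  have hd1 : d - 1 = (d - 2) + 1 := by omega
  simp only [Fintype.card_fin]
  rw [hd1, neg_pow, pow_succ γ, mul_assoc, mul_assoc, mul_inv_cancel₀ hγ, mul_one]
end

section
/- Let d ≥ 2, h, g ∈ ℂ^{d-1}, and with β = 1 let γ = 1 - h^H g. Then the d×d matrix W_ICE = [[1, h^H],[g, -γ I_{d-1}]] satisfies det(W_ICE) = (-1)^{d-1}(1 - h^H g)^{d-2}. -/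
open Matrix

/-- CSV normalization: with β = 1 and γ = 1 - hᴴ g, the ICE de-mixing matrix
    W = [[1, hᴴ],[g, -γ I]] satisfies det W = (-1)^(d-1) (1 - hᴴ g)^(d-2). -/
theorem stmt2 (d : ℕ) (hd : 2 ≤ d)
    (g h : Matrix (Fin (d - 1)) Unit ℂ)
    (γ : ℂ) (hγ : γ = 1 - (hᴴ * g) () ())
    (W : Matrix (Unit ⊕ Fin (d - 1)) (Unit ⊕ Fin (d - 1)) ℂ)
    (hW : W = fromBlocks (Matrix.of fun _ _ => (1 : ℂ)) hᴴ g (-(γ • 1))) :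
    W.det = (-1) ^ (d - 1) * (1 - (hᴴ * g) () ()) ^ (d - 2) := by
  set s : ℂ := (hᴴ * g) () () with hs
  have hA : (Matrix.of fun _ _ => (1 : ℂ) : Matrix Unit Unit ℂ) = 1 := by
    ext i j
    simp [Matrix.one_apply, Subsingleton.elim i j]
  have hcard : Fintype.card (Fin (d - 1)) = d - 1 := by simp
  have hdet : W.det = (-1 : ℂ) ^ (d - 1) * (γ • 1 + g * hᴴ).det := by
    rw [hW, hA, det_fromBlocks_one₁₁]
    have : -(γ • (1 : Matrix (Fin (d-1)) (Fin (d-1)) ℂ)) - g * hᴴ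
        = -(γ • 1 + g * hᴴ) := by abel
    rw [this, det_neg, hcard]
  rw [hdet]
  congr 1
  -- goal: det (γ•1 + g hᴴ) = (1 - s)^(d-2)
  have h1 : 1 ≤ d - 1 := by omega
  by_cases hγ0 : γ = 0
  · -- then s = 1 ; RHS = 0^(d-2)
    have hs1 : s = 1 := by
      have h0 := hγ; rw [hγ0] at h0
      exact (sub_eq_zero.mp h0.symm).symm
    rw [hγ0, zero_smul, zero_add, hs1, sub_self]
    rcases Nat.lt_or_ge (d - 1) 2 with hn | hn
    · -- d - 1 = 1, det is the single entry = s = 1, and 0^0 = 1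
      have hd1 : d = 2 := by omega
      subst hd1
      have hdet1 : (g * hᴴ).det = (g * hᴴ) 0 0 := Matrix.det_fin_one _
      have hs1' : (hᴴ * g) () () = 1 := by rw [← hs]; exact hs1
      simp only [Nat.sub_self, pow_zero]
      rw [hdet1]
      simp only [Matrix.mul_apply, Matrix.conjTranspose_apply] at hs1' ⊢
      simpa [mul_comm] using hs1'
    · -- d - 1 ≥ 2 : rank argument
      have hz : (g * hᴴ).det = 0 := by
        by_contra hne
        have hu : IsUnit (g * hᴴ) := (isUnit_iff_isUnit_det _).2 (isUnit_iff_ne_zero.2 hne)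
        have hr : (g * hᴴ).rank = Fintype.card (Fin (d - 1)) :=
          rank_of_isUnit _ hu
        have hle : (g * hᴴ).rank ≤ Fintype.card Unit :=
          le_trans (rank_mul_le_left g hᴴ) (rank_le_card_width g)
        rw [hr, hcard] at hle
        simp at hle
        omega
      rw [hz, zero_pow (by omega)]
  · -- γ ≠ 0
    have key : γ • (1 : Matrix (Fin (d-1)) (Fin (d-1)) ℂ) + g * hᴴ
        = γ • (1 + (γ⁻¹ • g) * hᴴ) := by
      rw [smul_add, Matrix.smul_mul, smul_smul, mul_inv_cancel₀ hγ0, one_smul]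
    rw [key, det_smul, hcard, det_one_add_mul_comm, det_unique,
        Matrix.mul_smul, Matrix.add_apply]
    have hone : (1 : Matrix Unit Unit ℂ) () () = 1 := Matrix.one_apply_eq _
    have hentry : (γ⁻¹ • (hᴴ * g)) () () = γ⁻¹ * s := rfl
    rw [hone, hentry]
    have hpow : γ ^ (d - 1) = γ ^ (d - 2) * γ := by
      rw [← pow_succ]
      congr 1
      omega
    have key2 : γ * (1 + γ⁻¹ * s) = 1 := by
      field_simp
      rw [hγ]; ring
    rw [hpow, mul_assoc, key2, mul_one, hγ]
end

section
/- Let F be the (M+1)(d-1) × (M+1)(d-1) Hermitian block matrix with blocks F_{11} = Σ_{m=1}^M K_m σ_m² (where K_m = C_m^{-1}), F_{1,m+1} = F_{m+1,1} = -I for m=1,…,M, F_{m+1,m+1} = κ_m C_m, and zero elsewhere, where each C_m is positive definite, κ_m σ_m² > 1. Then the (m+1,m+1) block of F^{-1} equals (1/κ_m) C_m^{-1} + (1/κ_m) C_m^{-1} ( Σ_{i=1}^M ((σ_i² κ_i − 1)/κ_i) C_i^{-1} )^{-1} (1/κ_m) C_m^{-1}. -/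
/-!
The lower-right corner of `F` is block diagonal with blocks `κ_m C_m`, so its Schur complement is
`F₁₁ - Σ_m (κ_m C_m)⁻¹ = Σ_m ((σ_m κ_m - 1) / κ_m) C_m⁻¹`, positive definite because
`κ_m σ_m > 1`. The Schur-complement formula gives the lower-right corner of `F⁻¹` as
`D⁻¹ + D⁻¹ Y S⁻¹ B D⁻¹`; since the coupling blocks `B`, `Y` are stacks of `-I`, its `(m, m)` block
is `D_m⁻¹ + D_m⁻¹ S⁻¹ D_m⁻¹`.
-/

open Matrix ComplexOrder

namespace Matrix

variable {ι n R : Type*} [Fintype ι] [Fintype n] [DecidableEq ι] [DecidableEq n] [CommRing R]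

theorem inv_fromBlocks₂₂_eq {m : Type*} [Fintype m] [DecidableEq m] (A : Matrix m m R)
    (B : Matrix m n R) (C : Matrix n m R) (D : Matrix n n R) (hD : IsUnit D)
    (hS : IsUnit (A - B * D⁻¹ * C)) :
    (fromBlocks A B C D)⁻¹ =
      fromBlocks (A - B * D⁻¹ * C)⁻¹ (-((A - B * D⁻¹ * C)⁻¹ * B * D⁻¹))
        (-(D⁻¹ * C * (A - B * D⁻¹ * C)⁻¹))
        (D⁻¹ + D⁻¹ * C * (A - B * D⁻¹ * C)⁻¹ * B * D⁻¹) := by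
  let := hD.invertible
  let : Invertible (A - B * ⅟D * C) := by rw [invOf_eq_nonsing_inv]; exact hS.invertible
  let := fromBlocks₂₂Invertible A B C D
  rw [← invOf_eq_nonsing_inv, invOf_fromBlocks₂₂_eq]
  simp only [invOf_eq_nonsing_inv]

/-- Block-diagonal matrix on `ι × n` with the block index first
(`Matrix.blockDiagonal` puts it second). -/
def blockDiagonalFst (D : ι → Matrix n n R) : Matrix (ι × n) (ι × n) R :=
  of fun p q => if p.1 = q.1 then D p.1 p.2 q.2 else 0

variable (ι n R) in
def identityStack : Matrix (ι × n) n R :=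
  of fun p j => (1 : Matrix n n R) p.2 j

omit [DecidableEq n] in
theorem blockDiagonalFst_mul (D E : ι → Matrix n n R) :
    blockDiagonalFst D * blockDiagonalFst E = blockDiagonalFst fun k => D k * E k := by
  ext ⟨k, i⟩ ⟨l, j⟩
  by_cases h : k = l
  · subst h
    simp [blockDiagonalFst, mul_apply, Fintype.sum_prod_type]
  · simp [blockDiagonalFst, mul_apply, Fintype.sum_prod_type, h]

omit [Fintype ι] [Fintype n] in
theorem blockDiagonalFst_one : blockDiagonalFst (fun _ => 1 : ι → Matrix n n R) = 1 := by
  ext ⟨k, i⟩ ⟨l, j⟩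
  simp [blockDiagonalFst, one_apply, Prod.ext_iff, ite_and]

theorem blockDiagonalFst_inv_mul (D : ι → Matrix n n R) (hD : ∀ k, IsUnit (D k)) :
    blockDiagonalFst (fun k => (D k)⁻¹) * blockDiagonalFst D = 1 := by
  rw [blockDiagonalFst_mul, ← blockDiagonalFst_one]
  congr! with k
  exact nonsing_inv_mul _ ((isUnit_iff_isUnit_det _).mp (hD k))

theorem inv_blockDiagonalFst (D : ι → Matrix n n R) (hD : ∀ k, IsUnit (D k)) :
    (blockDiagonalFst D)⁻¹ = blockDiagonalFst fun k => (D k)⁻¹ :=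
  inv_eq_left_inv (blockDiagonalFst_inv_mul D hD)

theorem isUnit_blockDiagonalFst (D : ι → Matrix n n R) (hD : ∀ k, IsUnit (D k)) :
    IsUnit (blockDiagonalFst D) :=
  (isUnit_iff_isUnit_det _).mpr (isUnit_det_of_left_inverse (blockDiagonalFst_inv_mul D hD))

theorem blockDiagonalFst_mul_identityStack (D : ι → Matrix n n R) :
    blockDiagonalFst D * identityStack ι n R = of fun p j => D p.1 p.2 j := by
  ext ⟨k, i⟩ j
  rw [mul_apply]
  simp [blockDiagonalFst, identityStack, Fintype.sum_prod_type, one_apply]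

theorem identityStack_transpose_mul_blockDiagonalFst (D : ι → Matrix n n R) :
    (identityStack ι n R)ᵀ * blockDiagonalFst D = of fun i q => D q.1 i q.2 := by
  ext i ⟨l, j⟩
  rw [mul_apply]
  simp [blockDiagonalFst, identityStack, Fintype.sum_prod_type, one_apply]

theorem identityStack_transpose_mul_blockDiagonalFst_mul_identityStack
    (D : ι → Matrix n n R) :
    (identityStack ι n R)ᵀ * blockDiagonalFst D * identityStack ι n R = ∑ k, D k := by
  ext i j
  rw [Matrix.mul_assoc, blockDiagonalFst_mul_identityStack, mul_apply]
  simp [identityStack, Fintype.sum_prod_type, one_apply, Matrix.sum_apply]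

theorem blockDiagonalFst_mul_identityStack_mul_mul_transpose_mul_blockDiagonalFst
    (D D' : ι → Matrix n n R) (X : Matrix n n R) :
    blockDiagonalFst D * identityStack ι n R * X * (identityStack ι n R)ᵀ *
        blockDiagonalFst D' = of fun p q => (D p.1 * X * D' q.1) p.2 q.2 := by
  ext p q
  rw [Matrix.mul_assoc _ (identityStack ι n R)ᵀ, identityStack_transpose_mul_blockDiagonalFst,
    blockDiagonalFst_mul_identityStack]
  simp [mul_apply]

def arrowhead (A : Matrix n n R) (D : ι → Matrix n n R) :
    Matrix (n ⊕ ι × n) (n ⊕ ι × n) R :=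
  fromBlocks A (-(identityStack ι n R)ᵀ) (-identityStack ι n R) (blockDiagonalFst D)

theorem arrowhead_inv_inr_inr (A : Matrix n n R) (D : ι → Matrix n n R)
    (hD : ∀ k, IsUnit (D k)) (hS : IsUnit (A - ∑ k, (D k)⁻¹)) (m : ι) (i j : n) :
    (arrowhead A D)⁻¹ (.inr (m, i)) (.inr (m, j)) =
      ((D m)⁻¹ + (D m)⁻¹ * (A - ∑ k, (D k)⁻¹)⁻¹ * (D m)⁻¹) i j := by
  have hSchur : A - -(identityStack ι n R)ᵀ * (blockDiagonalFst D)⁻¹ * -identityStack ι n R =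
      A - ∑ k, (D k)⁻¹ := by
    rw [Matrix.neg_mul, Matrix.mul_neg, Matrix.neg_mul, neg_neg, inv_blockDiagonalFst D hD,
      identityStack_transpose_mul_blockDiagonalFst_mul_identityStack]
  rw [arrowhead, inv_fromBlocks₂₂_eq _ _ _ _ (isUnit_blockDiagonalFst D hD) (hSchur ▸ hS),
    hSchur, inv_blockDiagonalFst D hD]
  simp only [fromBlocks_apply₂₂, add_apply, Matrix.neg_mul, Matrix.mul_neg, neg_neg,
    blockDiagonalFst_mul_identityStack_mul_mul_transpose_mul_blockDiagonalFst]
  simp [blockDiagonalFst]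

end Matrix

theorem stmt17_general (M d : ℕ)
    (C : Fin M → Matrix (Fin (d - 1)) (Fin (d - 1)) ℂ) (hC : ∀ m, (C m).PosDef)
    (κ σ : Fin M → ℝ) (hκ : ∀ m, 0 < κ m)
    (hκσ : ∀ m, 1 < κ m * σ m)
    (F : Matrix (Fin (d - 1) ⊕ Fin M × Fin (d - 1))
        (Fin (d - 1) ⊕ Fin M × Fin (d - 1)) ℂ)
    (hF : F = fromBlocks
        (∑ m, ((σ m : ℝ) : ℂ) • (C m)⁻¹)
        (Matrix.of fun i p => -(if i = p.2 then (1 : ℂ) else 0))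
        (Matrix.of fun p j => -(if p.2 = j then (1 : ℂ) else 0))
        (Matrix.of fun p q =>
          if p.1 = q.1 then ((κ p.1 : ℝ) : ℂ) * C p.1 p.2 q.2 else 0))
    (m : Fin M) :
    (Matrix.of fun i j => F⁻¹ (Sum.inr (m, i)) (Sum.inr (m, j)))
      = ((1 / κ m : ℝ) : ℂ) • (C m)⁻¹
        + (((1 / κ m : ℝ) : ℂ) • (C m)⁻¹)
          * (∑ i, (((σ i * κ i - 1) / κ i : ℝ) : ℂ) • (C i)⁻¹)⁻¹
          * (((1 / κ m : ℝ) : ℂ) • (C m)⁻¹) := by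
  set D : Fin M → Matrix (Fin (d - 1)) (Fin (d - 1)) ℂ := fun k => ((κ k : ℝ) : ℂ) • C k
  have hD : ∀ k, IsUnit (D k) := fun k => ((hC k).smul (Complex.zero_lt_real.mpr (hκ k))).isUnit
  have hDinv : ∀ k, (D k)⁻¹ = ((1 / κ k : ℝ) : ℂ) • (C k)⁻¹ := fun k => by
    refine inv_eq_left_inv ?_
    rw [smul_mul_smul_comm, nonsing_inv_mul _ ((isUnit_iff_isUnit_det _).mp (hC k).isUnit),
      ← Complex.ofReal_mul, one_div_mul_cancel (hκ k).ne', Complex.ofReal_one, one_smul]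
  have hFD : F = arrowhead (∑ k, ((σ k : ℝ) : ℂ) • (C k)⁻¹) D := by
    rw [hF, arrowhead]
    -- the other three blocks agree definitionally
    congr 1
    ext i p
    simp [identityStack, one_apply, eq_comm]
  have hSchur : ∑ k, ((σ k : ℝ) : ℂ) • (C k)⁻¹ - ∑ k, (D k)⁻¹ =
      ∑ k, (((σ k * κ k - 1) / κ k : ℝ) : ℂ) • (C k)⁻¹ := by
    simp only [hDinv, ← Finset.sum_sub_distrib, ← sub_smul]
    congr! 2 with k
    rw [← Complex.ofReal_sub, sub_div, mul_div_cancel_right₀ _ (hκ k).ne']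
  have hS : (∑ k, (((σ k * κ k - 1) / κ k : ℝ) : ℂ) • (C k)⁻¹).PosDef := by
    refine posDef_sum ⟨m, Finset.mem_univ m⟩ fun k _ => (hC k).inv.smul ?_
    exact Complex.zero_lt_real.mpr (div_pos (by linarith [hκσ k]) (hκ k))
  ext i j
  rw [of_apply, hFD, arrowhead_inv_inr_inr _ _ hD (hSchur ▸ hS.isUnit), hSchur, hDinv]

/-- Arrowhead-block-matrix inversion for the CMV model (circular Gaussian
    background): with F₁₁ = Σ_m σ_m² C_m⁻¹, diagonal blocks κ_m C_m, and -I
    off-diagonal couplings, the (m+1, m+1) block of F⁻¹ equals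
    (1/κ_m) C_m⁻¹ + (1/κ_m) C_m⁻¹ (Σ_i ((σ_i² κ_i − 1)/κ_i) C_i⁻¹)⁻¹ (1/κ_m) C_m⁻¹. -/
theorem stmt17 (M d : ℕ) (hM : 1 ≤ M) (hd : 2 ≤ d)
    (C : Fin M → Matrix (Fin (d - 1)) (Fin (d - 1)) ℂ) (hC : ∀ m, (C m).PosDef)
    (κ σ : Fin M → ℝ) (hκ : ∀ m, 0 < κ m) (hσ : ∀ m, 0 < σ m)
    (hκσ : ∀ m, 1 < κ m * σ m)
    (F : Matrix (Fin (d - 1) ⊕ Fin M × Fin (d - 1))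
        (Fin (d - 1) ⊕ Fin M × Fin (d - 1)) ℂ)
    (hF : F = fromBlocks
        (∑ m, ((σ m : ℝ) : ℂ) • (C m)⁻¹)
        (Matrix.of fun i p => -(if i = p.2 then (1 : ℂ) else 0))
        (Matrix.of fun p j => -(if p.2 = j then (1 : ℂ) else 0))
        (Matrix.of fun p q =>
          if p.1 = q.1 then ((κ p.1 : ℝ) : ℂ) * C p.1 p.2 q.2 else 0))
    (m : Fin M) :
    (Matrix.of fun i j => F⁻¹ (Sum.inr (m, i)) (Sum.inr (m, j)))
      = ((1 / κ m : ℝ) : ℂ) • (C m)⁻¹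
        + (((1 / κ m : ℝ) : ℂ) • (C m)⁻¹)
          * (∑ i, (((σ i * κ i - 1) / κ i : ℝ) : ℂ) • (C i)⁻¹)⁻¹
          * (((1 / κ m : ℝ) : ℂ) • (C m)⁻¹) :=
  stmt17_general M d C hC κ σ hκ hκσ F hF m
end

section
/- For the complex GGD score statistic: if κ̄(α, γ) = α² Γ(2/α) / ((1-γ²) Γ(1/α)²) with shape parameter α > 0 and circularity coefficient γ ∈ [0,1), then κ̄(1, 0) = 1, and for fixed α, κ̄ is strictly increasing in γ on [0,1), and κ̄(α,γ) > 1 whenever γ > 0. -/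
open Real

lemma gamma_sq_le (t : ℝ) (ht : 0 < t) :
    Real.Gamma (t + 1) ^ 2 ≤ Real.Gamma (2 * t) := by
  have h2t : (0 : ℝ) < 2 * t := by linarith
  have hc := Real.convexOn_log_Gamma.2 (Set.mem_Ioi.mpr h2t)
      (Set.mem_Ioi.mpr (by norm_num : (0:ℝ) < 2))
      (by norm_num : (0:ℝ) ≤ (1/2 : ℝ)) (by norm_num : (0:ℝ) ≤ (1/2 : ℝ))
      (by norm_num)
  have hmid : (1/2 : ℝ) • (2 * t) + (1/2 : ℝ) • (2 : ℝ) = t + 1 := by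
    simp [smul_eq_mul]
  rw [hmid] at hc
  simp only [Function.comp_apply, smul_eq_mul, Real.Gamma_two, Real.log_one,
    mul_zero, add_zero] at hc
  have h1 : 2 * Real.log (Real.Gamma (t + 1)) ≤ Real.log (Real.Gamma (2 * t)) := by
    linarith
  have hp1 : 0 < Real.Gamma (t + 1) := Real.Gamma_pos_of_pos (by linarith)
  have hp2 : 0 < Real.Gamma (2 * t) := Real.Gamma_pos_of_pos h2t
  have h2 : (2:ℝ) * Real.log (Real.Gamma (t + 1)) = Real.log (Real.Gamma (t + 1) ^ 2) := by
    rw [Real.log_pow]; norm_num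
  rw [h2] at h1
  have := Real.exp_le_exp.mpr h1
  rwa [Real.exp_log hp2, Real.exp_log (by positivity)] at this
  
lemma num_ge (α : ℝ) (hα : 0 < α) :
    Real.Gamma (1 / α) ^ 2 ≤ α ^ 2 * Real.Gamma (2 / α) := by
  have ht : (0 : ℝ) < 1 / α := by positivity
  have h := gamma_sq_le (1 / α) ht
  have hadd : Real.Gamma (1 / α + 1) = (1 / α) * Real.Gamma (1 / α) :=
    Real.Gamma_add_one (ne_of_gt ht)
  rw [hadd] at h
  have h2 : (2 : ℝ) * (1 / α) = 2 / α := by ring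
  rw [h2, mul_pow] at h
  have := mul_le_mul_of_nonneg_left h (le_of_lt (by positivity : (0:ℝ) < α ^ 2))
  calc Real.Gamma (1 / α) ^ 2
      = α ^ 2 * ((1 / α) ^ 2 * Real.Gamma (1 / α) ^ 2) := by
        field_simp
    _ ≤ α ^ 2 * Real.Gamma (2 / α) := this

/-- Properties of the complex GGD normalized score statistic
    κ̄(α, γ) = α² Γ(2/α) / ((1-γ²) Γ(1/α)²): κ̄(1,0) = 1, κ̄ is strictly
    increasing in γ on [0,1) for fixed α > 0, and κ̄(α,γ) > 1 whenever γ > 0. -/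
theorem stmt19 (κ : ℝ → ℝ → ℝ)
    (hκ : ∀ α γ, κ α γ = α ^ 2 * Real.Gamma (2 / α) /
        ((1 - γ ^ 2) * Real.Gamma (1 / α) ^ 2)) :
    κ 1 0 = 1
    ∧ (∀ α : ℝ, 0 < α → StrictMonoOn (fun γ => κ α γ) (Set.Ico (0 : ℝ) 1))
    ∧ (∀ α γ : ℝ, 0 < α → 0 < γ → γ < 1 → 1 < κ α γ) := by
  refine ⟨?_, ?_, ?_⟩
  · rw [hκ]
    norm_num [Real.Gamma_two, Real.Gamma_one]
  · intro α hα a ha b hb hab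
    simp only [hκ]
    obtain ⟨ha0, ha1⟩ := ha
    obtain ⟨hb0, hb1⟩ := hb
    have hC : 0 < α ^ 2 * Real.Gamma (2 / α) := by
      have := Real.Gamma_pos_of_pos (by positivity : (0:ℝ) < 2 / α)
      positivity
    have hD : 0 < Real.Gamma (1 / α) ^ 2 := by
      have := Real.Gamma_pos_of_pos (by positivity : (0:ℝ) < 1 / α)
      positivity
    have hsq : a ^ 2 < b ^ 2 := by
      apply pow_lt_pow_left₀ hab ha0
      norm_num
    have hb2 : 0 < 1 - b ^ 2 := by nlinarith
    apply div_lt_div_of_pos_left hC (by positivity)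
    apply mul_lt_mul_of_pos_right (by linarith) hD
  · intro α γ hα hγ0 hγ1
    rw [hκ]
    have hγ2 : 0 < 1 - γ ^ 2 := by nlinarith
    have hD : 0 < Real.Gamma (1 / α) ^ 2 := by
      have := Real.Gamma_pos_of_pos (by positivity : (0:ℝ) < 1 / α)
      positivity
    rw [one_lt_div (by positivity)]
    have h1 : (1 - γ ^ 2) * Real.Gamma (1 / α) ^ 2 < Real.Gamma (1 / α) ^ 2 := by
      nlinarith [mul_pos (mul_pos hγ0 hγ0) hD]
    exact lt_of_lt_of_le h1 (num_ge α hα)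
end
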